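/- For the Lie algebra $G_2$, the number of distinct weights of the finite-dimensional irreducible module with highest weight $\lambda = \lambda_1\omega_1 + \lambda_2\omega_2$ (with $\lambda_1, \lambda_2 \in \mathbb{N}_0$) equals $1 + 3(\lambda_1+\lambda_2) + 3(3\lambda_1^2 + \lambda_2^2 + 4\lambda_1\lambda_2)$. In particular, this number is congruent to $1$ modulo $6$. -/

import Mathlib

/-- The simple root `α_i`, written in fundamental-weight (Dynkin-label) coordinates:
its `j`-th Dynkin label is the Cartan matrix entry `A_{ji} = ⟨α_j^∨, α_i⟩`. -/
def colRoot {r : ℕ} (A : Fin r → Fin r → ℤ) (i : Fin r) : Fin r → ℤ := fun j => A j i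

/-- The simple reflection `s_i` on the weight lattice: `s_i(μ) = μ - μ_i α_i`. -/
def simpleRefl {r : ℕ} (A : Fin r → Fin r → ℤ) (i : Fin r) :
    (Fin r → ℤ) → (Fin r → ℤ) :=
  fun μ => μ - μ i • colRoot A i

/-- The Weyl group of the Cartan matrix `A`, realized as the monoid of maps of the weight
lattice generated by the simple reflections (for a finite Weyl group, which consists of
involutions, this closure coincides with the generated group). -/
def weylMonoid {r : ℕ} (A : Fin r → Fin r → ℤ) : Submonoid (Function.End (Fin r → ℤ)) :=
  Submonoid.closure (Set.range (simpleRefl A))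

/-- `μ ≤ λ` in the dominance (root) order: `λ - μ` is a non-negative integer combination
of the simple roots. -/
def rootLE {r : ℕ} (A : Fin r → Fin r → ℤ) (μ lam : Fin r → ℤ) : Prop :=
  ∃ n : Fin r → ℕ, lam = μ + ∑ i, (n i : ℤ) • colRoot A i

/-- The set `P(λ)` of distinct weights of the finite-dimensional irreducible
highest-weight module `L(λ)`: by the classical saturation theorem, for dominant integral
`λ` these are exactly the integral weights `μ` all of whose Weyl conjugates satisfy
`w(μ) ≤ λ` in the dominance order. -/
def weightSet {r : ℕ} (A : Fin r → Fin r → ℤ) (lam : Fin r → ℤ) : Set (Fin r → ℤ) :=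
  {μ | ∀ w ∈ weylMonoid A, rootLE A (w μ) lam}

/-- The Cartan matrix of `G₂`, with `α₁` the long simple root. -/
def cartanG2 : Fin 2 → Fin 2 → ℤ := ![![2, -1], ![-3, 2]]

/-!
The weights of `L(λ)` are the lattice points of the convex hull of the Weyl orbit `Wλ`, a
dodecagon cut out by the `W`-images of the two dominance inequalities; the six rotations in
`W` already produce all twelve. Counting lattice points column by column, the column length
over `x` is piecewise linear on the ranges cut out by `±l₁` and `±(l₁ + l₂)`, up to a parity
correction for `|x| ≤ l₁`. Pairing `x` with its mirror image in each range gives constant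
pair sums, hence the quadratic count. The congruence holds since `l(l + 1)` is even.
-/

open Finset

section WeylGroup

variable {r : ℕ} (A : Fin r → Fin r → ℤ)

theorem mapsTo_of_mem_weylMonoid {S : Set (Fin r → ℤ)}
    (h : ∀ i, Set.MapsTo (simpleRefl A i) S S) {w : Function.End (Fin r → ℤ)}
    (hw : w ∈ weylMonoid A) : Set.MapsTo w S S := by
  induction hw using Submonoid.closure_induction with
  | mem _ hw =>
    obtain ⟨i, rfl⟩ := hw
    exact h i
  | one => exact Set.mapsTo_id S
  | mul u v _ _ hu hv => exact hu.comp hv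

theorem simpleRefl_apply (i j : Fin r) (μ : Fin r → ℤ) :
    simpleRefl A i μ j = μ j - μ i * A j i :=
  rfl

theorem simpleRefl_mem_weylMonoid (i : Fin r) : simpleRefl A i ∈ weylMonoid A :=
  Submonoid.subset_closure ⟨i, rfl⟩

variable {A}

theorem rootLE_of_mem_weightSet {lam μ : Fin r → ℤ} (h : μ ∈ weightSet A lam) :
    rootLE A μ lam :=
  h 1 (one_mem _)

theorem mapsTo_weightSet {lam : Fin r → ℤ} {w : Function.End (Fin r → ℤ)}
    (hw : w ∈ weylMonoid A) : Set.MapsTo w (weightSet A lam) (weightSet A lam) :=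
  fun _ hμ v hv => hμ (v * w) (mul_mem hv hw)

theorem subset_weightSet {lam : Fin r → ℤ} {S : Set (Fin r → ℤ)}
    (hS : ∀ i, Set.MapsTo (simpleRefl A i) S S) (hle : ∀ μ ∈ S, rootLE A μ lam) :
    S ⊆ weightSet A lam :=
  fun _ hμ _ hw => hle _ (mapsTo_of_mem_weylMonoid A hS hw hμ)

end WeylGroup

theorem Finset.sum_Ioc_add_sum_Ioc {α M : Type*} [LinearOrder α] [LocallyFiniteOrder α]
    [AddCommMonoid M] (f : α → M) {a b c : α} (hab : a ≤ b) (hbc : b ≤ c) :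
    ∑ x ∈ Ioc a b, f x + ∑ x ∈ Ioc b c, f x = ∑ x ∈ Ioc a c, f x := by
  rw [← Ioc_union_Ioc_eq_Ioc hab hbc, sum_union (Ioc_disjoint_Ioc_of_le le_rfl)]

theorem Finset.two_mul_sum_Ioc_of_add_reflect {a b K : ℤ} (hab : a ≤ b) (f : ℤ → ℤ)
    (h : ∀ x ∈ Ioc a b, f x + f (a + b + 1 - x) = K) :
    2 * ∑ x ∈ Ioc a b, f x = (b - a) * K := by
  have reflect : ∑ x ∈ Ioc a b, f (a + b + 1 - x) = ∑ x ∈ Ioc a b, f x :=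
    sum_nbij' (fun x => a + b + 1 - x) (fun x => a + b + 1 - x)
      (fun x hx => by simp only [mem_Ioc] at hx ⊢; omega)
      (fun x hx => by simp only [mem_Ioc] at hx ⊢; omega)
      (fun x _ => by ring) (fun x _ => by ring) (fun x _ => rfl)
  rw [two_mul]
  nth_rw 2 [← reflect]
  rw [← sum_add_distrib, sum_congr rfl h, sum_const, Int.card_Ioc,
    nsmul_eq_mul, Int.toNat_of_nonneg (by omega)]

namespace G2

lemma simpleRefl_zero_apply_zero (μ : Fin 2 → ℤ) : simpleRefl cartanG2 0 μ 0 = -μ 0 := by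
  rw [simpleRefl_apply, show cartanG2 0 0 = 2 from rfl]
  ring

lemma simpleRefl_zero_apply_one (μ : Fin 2 → ℤ) :
    simpleRefl cartanG2 0 μ 1 = 3 * μ 0 + μ 1 := by
  rw [simpleRefl_apply, show cartanG2 1 0 = -3 from rfl]
  ring

lemma simpleRefl_one_apply_zero (μ : Fin 2 → ℤ) : simpleRefl cartanG2 1 μ 0 = μ 0 + μ 1 := by
  rw [simpleRefl_apply, show cartanG2 0 1 = -1 from rfl]
  ring

lemma simpleRefl_one_apply_one (μ : Fin 2 → ℤ) : simpleRefl cartanG2 1 μ 1 = -μ 1 := by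
  rw [simpleRefl_apply, show cartanG2 1 1 = 2 from rfl]
  ring

/-- `λ - ν = n₁α₁ + n₂α₂` forces `n₁ = 2d₀ + d₁`, `n₂ = 3d₀ + 2d₁` for `d = λ - ν`,
since `cartanG2` is unimodular. -/
theorem rootLE_iff (ν lam : Fin 2 → ℤ) :
    rootLE cartanG2 ν lam ↔
      2 * ν 0 + ν 1 ≤ 2 * lam 0 + lam 1 ∧ 3 * ν 0 + 2 * ν 1 ≤ 3 * lam 0 + 2 * lam 1 := by
  have coord : ∀ n : Fin 2 → ℕ, ∀ j, (ν + ∑ i, (n i : ℤ) • colRoot cartanG2 i) j =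
      ν j + n 0 * cartanG2 j 0 + n 1 * cartanG2 j 1 := fun n j => by
    simp only [Pi.add_apply, Fin.sum_univ_two, Pi.smul_apply, colRoot, smul_eq_mul, add_assoc]
  constructor
  · rintro ⟨n, h⟩
    have h0 := (congrFun h 0).trans (coord n 0)
    have h1 := (congrFun h 1).trans (coord n 1)
    simp only [cartanG2, Matrix.cons_val_zero, Matrix.cons_val_one] at h0 h1
    omega
  · rintro ⟨h0, h1⟩
    refine ⟨![(2 * (lam 0 - ν 0) + (lam 1 - ν 1)).toNat,
      (3 * (lam 0 - ν 0) + 2 * (lam 1 - ν 1)).toNat], funext (Fin.forall_fin_two.2 ⟨?_, ?_⟩)⟩ <;>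
    rw [coord] <;> simp only [cartanG2, Matrix.cons_val_zero, Matrix.cons_val_one] <;> omega

/-- For dominant `λ = c₁α₁ + c₂α₂`, the points `(x, y)` (Dynkin labels) of the convex hull of
the Weyl orbit of `λ`: the twelve conditions are the images of `2x + y ≤ c₁` and
`3x + 2y ≤ c₂` under the Weyl group. -/
def InHull (c₁ c₂ x y : ℤ) : Prop :=
  x ≤ c₁ ∧ -c₁ ≤ x ∧ x + y ≤ c₁ ∧ -c₁ ≤ x + y ∧ 2 * x + y ≤ c₁ ∧ -c₁ ≤ 2 * x + y ∧
  y ≤ c₂ ∧ -c₂ ≤ y ∧ 3 * x + y ≤ c₂ ∧ -c₂ ≤ 3 * x + y ∧ 3 * x + 2 * y ≤ c₂ ∧ -c₂ ≤ 3 * x + 2 * y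

instance (c₁ c₂ x y : ℤ) : Decidable (InHull c₁ c₂ x y) := by
  unfold InHull; infer_instance

theorem weightSet_eq (lam : Fin 2 → ℤ) :
    weightSet cartanG2 lam =
      {μ | InHull (2 * lam 0 + lam 1) (3 * lam 0 + 2 * lam 1) (μ 0) (μ 1)} := by
  refine subset_antisymm (fun μ hμ => ?_) (subset_weightSet
    (Fin.forall_fin_two.2 ⟨fun μ hμ => ?_, fun μ hμ => ?_⟩) fun μ hμ => ?_)
  · have hle := fun ν (hν : ν ∈ weightSet cartanG2 lam) =>
      (rootLE_iff ν lam).1 (rootLE_of_mem_weightSet hν)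
    have hrot : Set.MapsTo (fun ν => simpleRefl cartanG2 0 (simpleRefl cartanG2 1 ν))
        (weightSet cartanG2 lam) (weightSet cartanG2 lam) := mapsTo_weightSet
      (mul_mem (simpleRefl_mem_weylMonoid cartanG2 0) (simpleRefl_mem_weylMonoid cartanG2 1))
    have h0 := hle _ hμ
    have h1 := hle _ (hrot hμ)
    have h2 := hle _ (hrot (hrot hμ))
    have h3 := hle _ (hrot (hrot (hrot hμ)))
    have h4 := hle _ (hrot (hrot (hrot (hrot hμ))))
    have h5 := hle _ (hrot (hrot (hrot (hrot (hrot hμ)))))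
    simp only [simpleRefl_zero_apply_zero, simpleRefl_zero_apply_one, simpleRefl_one_apply_zero,
      simpleRefl_one_apply_one] at h1 h2 h3 h4 h5
    simp only [Set.mem_ofPred_eq, InHull]
    omega
  · simp only [Set.mem_ofPred_eq, InHull, simpleRefl_zero_apply_zero,
      simpleRefl_zero_apply_one] at hμ ⊢
    omega
  · simp only [Set.mem_ofPred_eq, InHull, simpleRefl_one_apply_zero,
      simpleRefl_one_apply_one] at hμ ⊢
    omega
  · simp only [Set.mem_ofPred_eq, InHull] at hμ
    exact (rootLE_iff μ lam).2 ⟨hμ.2.2.2.2.1, hμ.2.2.2.2.2.2.2.2.2.2.1⟩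

def columnTop (c₁ c₂ x : ℤ) : ℤ :=
  min (min c₂ (c₁ - x)) (min (c₁ - 2 * x) (min (c₂ - 3 * x) ((c₂ - 3 * x) / 2)))

/-- The central symmetry `(x, y) ↦ (-x, -y)` of the hull puts the bottom of the column above
`x` at `-columnTop c₁ c₂ (-x)`. -/
def columnLength (c₁ c₂ x : ℤ) : ℤ :=
  columnTop c₁ c₂ x + 1 + columnTop c₁ c₂ (-x)

variable {a b x : ℤ}

theorem card_column (ha : 0 ≤ a) (hb : 0 ≤ b) (hx : x ∈ Icc (-(2 * a + b)) (2 * a + b)) :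
    (((Icc (-(3 * a + 2 * b)) (3 * a + 2 * b)).filter
      (InHull (2 * a + b) (3 * a + 2 * b) x)).card : ℤ) =
      columnLength (2 * a + b) (3 * a + 2 * b) x := by
  rw [mem_Icc] at hx
  have hcolumn : (Icc (-(3 * a + 2 * b)) (3 * a + 2 * b)).filter
      (InHull (2 * a + b) (3 * a + 2 * b) x) =
      Icc (-columnTop (2 * a + b) (3 * a + 2 * b) (-x))
        (columnTop (2 * a + b) (3 * a + 2 * b) x) := by
    ext y
    simp only [mem_filter, mem_Icc, InHull, columnTop]
    omega
  rw [hcolumn, Int.card_Icc, Int.toNat_of_nonneg]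
  · unfold columnLength
    ring
  · unfold columnTop
    omega

theorem columnLength_far_left (ha : 0 ≤ a) (hb : 0 ≤ b)
    (hx : x ∈ Ioc (-(2 * a + b) - 1) (-a - b)) :
    columnLength (2 * a + b) (3 * a + 2 * b) x = 2 * (3 * a + 2 * b) + 1 + 3 * x := by
  rw [mem_Ioc] at hx
  unfold columnLength columnTop
  omega

theorem columnLength_near_left (ha : 0 ≤ a) (hx : x ∈ Ioc (-a - b) (-a)) :
    columnLength (2 * a + b) (3 * a + 2 * b) x = 2 * (2 * a + b) + 1 + x := by
  rw [mem_Ioc] at hx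
  unfold columnLength columnTop
  omega

theorem columnLength_center (ha : 0 ≤ a) (hb : 0 ≤ b) (hx : x ∈ Ioc (-a) a) :
    columnLength (2 * a + b) (3 * a + 2 * b) x =
      (3 * a + 2 * b - 3 * x) / 2 + 1 + (3 * a + 2 * b + 3 * x) / 2 := by
  rw [mem_Ioc] at hx
  unfold columnLength columnTop
  omega

theorem columnLength_near_right (ha : 0 ≤ a) (hb : 0 ≤ b) (hx : x ∈ Ioc a (a + b)) :
    columnLength (2 * a + b) (3 * a + 2 * b) x = 2 * (2 * a + b) + 1 - x := by
  rw [mem_Ioc] at hx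
  unfold columnLength columnTop
  omega

theorem columnLength_far_right (ha : 0 ≤ a) (hb : 0 ≤ b)
    (hx : x ∈ Ioc (a + b) (2 * a + b)) :
    columnLength (2 * a + b) (3 * a + 2 * b) x = 2 * (3 * a + 2 * b) + 1 - 3 * x := by
  rw [mem_Ioc] at hx
  unfold columnLength columnTop
  omega

theorem two_mul_sum_columnLength (ha : 0 ≤ a) (hb : 0 ≤ b) :
    2 * ∑ x ∈ Ioc (-(2 * a + b) - 1) (2 * a + b), columnLength (2 * a + b) (3 * a + 2 * b) x =
      2 * (1 + 3 * (a + b) + 3 * (3 * a ^ 2 + b ^ 2 + 4 * a * b)) := by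
  set L := columnLength (2 * a + b) (3 * a + 2 * b)
  have far_left : 2 * ∑ x ∈ Ioc (-(2 * a + b) - 1) (-a - b), L x =
      (a + 1) * (3 * a + 2 * b + 2) := by
    rw [two_mul_sum_Ioc_of_add_reflect (K := 3 * a + 2 * b + 2) (by omega) L fun x hx => ?_]
    · ring
    dsimp only [L]
    rw [columnLength_far_left ha hb hx,
      columnLength_far_left ha hb (by rw [mem_Ioc] at hx ⊢; omega)]
    ring
  have near_left : 2 * ∑ x ∈ Ioc (-a - b) (-a), L x = b * (6 * a + 3 * b + 3) := by
    rw [two_mul_sum_Ioc_of_add_reflect (K := 6 * a + 3 * b + 3) (by omega) L fun x hx => ?_]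
    · ring
    dsimp only [L]
    rw [columnLength_near_left ha hx,
      columnLength_near_left ha (by rw [mem_Ioc] at hx ⊢; omega)]
    ring
  have center : 2 * ∑ x ∈ Ioc (-a) a, L x = 2 * a * (6 * a + 4 * b + 1) := by
    rw [two_mul_sum_Ioc_of_add_reflect (K := 6 * a + 4 * b + 1) (by omega) L fun x hx => ?_]
    · ring
    dsimp only [L]
    rw [columnLength_center ha hb hx,
      columnLength_center ha hb (by rw [mem_Ioc] at hx ⊢; omega)]
    -- the two floors lose `1` exactly when `3a + 2b + 3x` is odd: for one of `x`, `1 - x`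
    obtain ⟨k, hk | hk⟩ := Int.even_or_odd' (3 * a + 2 * b + 3 * x) <;> omega
  have near_right : 2 * ∑ x ∈ Ioc a (a + b), L x = b * (6 * a + 3 * b + 1) := by
    rw [two_mul_sum_Ioc_of_add_reflect (K := 6 * a + 3 * b + 1) (by omega) L fun x hx => ?_]
    · ring
    dsimp only [L]
    rw [columnLength_near_right ha hb hx,
      columnLength_near_right ha hb (by rw [mem_Ioc] at hx ⊢; omega)]
    ring
  have far_right : 2 * ∑ x ∈ Ioc (a + b) (2 * a + b), L x = a * (3 * a + 2 * b - 1) := by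
    rw [two_mul_sum_Ioc_of_add_reflect (K := 3 * a + 2 * b - 1) (by omega) L fun x hx => ?_]
    · ring
    dsimp only [L]
    rw [columnLength_far_right ha hb hx,
      columnLength_far_right ha hb (by rw [mem_Ioc] at hx ⊢; omega)]
    ring
  rw [← sum_Ioc_add_sum_Ioc L (b := a + b) (by omega) (by omega),
    ← sum_Ioc_add_sum_Ioc L (b := a) (by omega) (by omega),
    ← sum_Ioc_add_sum_Ioc L (b := -a) (by omega) (by omega),
    ← sum_Ioc_add_sum_Ioc L (b := -a - b) (by omega) (by omega)]
  linear_combination far_left + near_left + center + near_right + far_right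

theorem ncard_inHull (ha : 0 ≤ a) (hb : 0 ≤ b) :
    ({p : ℤ × ℤ | InHull (2 * a + b) (3 * a + 2 * b) p.1 p.2}.ncard : ℤ) =
      1 + 3 * (a + b) + 3 * (3 * a ^ 2 + b ^ 2 + 4 * a * b) := by
  have hbox : {p : ℤ × ℤ | InHull (2 * a + b) (3 * a + 2 * b) p.1 p.2} =
      ↑((Icc (-(2 * a + b)) (2 * a + b) ×ˢ Icc (-(3 * a + 2 * b)) (3 * a + 2 * b)).filter
        fun p => InHull (2 * a + b) (3 * a + 2 * b) p.1 p.2) := by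
    ext ⟨x, y⟩
    rw [Set.mem_ofPred_eq, mem_coe, mem_filter, mem_product, mem_Icc, mem_Icc]
    unfold InHull
    omega
  have hIcc : Icc (-(2 * a + b)) (2 * a + b) = Ioc (-(2 * a + b) - 1) (2 * a + b) := by
    ext x
    simp only [mem_Icc, mem_Ioc]
    omega
  rw [hbox, Set.ncard_coe_finset, card_filter, sum_product]
  simp only [← card_filter]
  push_cast
  rw [sum_congr rfl fun x hx => card_column ha hb hx, hIcc]
  linarith [two_mul_sum_columnLength ha hb]

theorem ncard_weightSet (ha : 0 ≤ a) (hb : 0 ≤ b) :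
    ((weightSet cartanG2 ![a, b]).ncard : ℤ) =
      1 + 3 * (a + b) + 3 * (3 * a ^ 2 + b ^ 2 + 4 * a * b) := by
  rw [weightSet_eq, ← ncard_inHull ha hb, ← Set.ncard_preimage_of_injective_subset_range
    (finTwoArrowEquiv ℤ).injective
    ((finTwoArrowEquiv ℤ).surjective.range_eq ▸ Set.subset_univ _)]
  rfl

end G2

theorem weightCount_mod_six (l1 l2 : ℕ) :
    (1 + 3 * (l1 + l2) + 3 * (3 * l1 ^ 2 + l2 ^ 2 + 4 * l1 * l2)) % 6 = 1 := by
  obtain ⟨m, hm⟩ := Nat.even_mul_succ_self l1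
  obtain ⟨n, hn⟩ := Nat.even_mul_succ_self l2
  have : 1 + 3 * (l1 + l2) + 3 * (3 * l1 ^ 2 + l2 ^ 2 + 4 * l1 * l2) =
      1 + 6 * (m + n + l1 ^ 2 + 2 * l1 * l2) := by
    nlinarith
  rw [this, Nat.add_mul_mod_self_left]

/-- for `G₂`, the number of distinct weights of the irreducible module
`L(λ₁ω₁ + λ₂ω₂)` (with `λ₁, λ₂ ∈ ℕ`) equals `1 + 3(λ₁+λ₂) + 3(3λ₁² + λ₂² + 4λ₁λ₂)`;
in particular, this number is congruent to `1` modulo `6`. -/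
theorem stmt_4 (l1 l2 : ℕ) :
    (weightSet cartanG2 ![(l1 : ℤ), (l2 : ℤ)]).ncard
        = 1 + 3 * (l1 + l2) + 3 * (3 * l1^2 + l2^2 + 4 * l1 * l2) ∧
    (weightSet cartanG2 ![(l1 : ℤ), (l2 : ℤ)]).ncard % 6 = 1 := by
  have hcard : (weightSet cartanG2 ![(l1 : ℤ), (l2 : ℤ)]).ncard
      = 1 + 3 * (l1 + l2) + 3 * (3 * l1^2 + l2^2 + 4 * l1 * l2) := by
    exact_mod_cast G2.ncard_weightSet (Int.natCast_nonneg l1) (Int.natCast_nonneg l2)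
  exact ⟨hcard, hcard ▸ weightCount_mod_six l1 l2⟩
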